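/- Let H be the group presented by ⟨x, y, z | xyx⁻¹y⁻², yzy⁻¹z⁻²⟩. If for some integers m and n the element xᵐ is conjugate in H to yⁿ, then m = 0. -/

import Mathlib

/-!
The exponent sum in `x` is a homomorphism from `H` to `ℤ`: both relators have `x`-exponent sum `0`.
Since `ℤ` is abelian, conjugate elements have the same image, and `xᵐ ↦ m`, `yⁿ ↦ 0`.
-/

/-- The relators of the group `H = ⟨x, y, z ∣ xyx⁻¹y⁻², yzy⁻¹z⁻²⟩`, where
`x = FreeGroup.of 0`, `y = FreeGroup.of 1`, `z = FreeGroup.of 2`. -/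
def hxyzRels : Set (FreeGroup (Fin 3)) :=
  {FreeGroup.of (0 : Fin 3) * FreeGroup.of (1 : Fin 3) * (FreeGroup.of (0 : Fin 3))⁻¹ *
     ((FreeGroup.of (1 : Fin 3)) ^ 2)⁻¹,
   FreeGroup.of (1 : Fin 3) * FreeGroup.of (2 : Fin 3) * (FreeGroup.of (1 : Fin 3))⁻¹ *
     ((FreeGroup.of (2 : Fin 3)) ^ 2)⁻¹}

def xExponentOnGenerators : Fin 3 → Multiplicative ℤ := ![Multiplicative.ofAdd 1, 1, 1]

theorem lift_xExponentOnGenerators_eq_one :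
    ∀ r ∈ hxyzRels, FreeGroup.lift xExponentOnGenerators r = 1 := by
  rintro r (rfl | rfl) <;> simp [xExponentOnGenerators]

def xExponent : PresentedGroup hxyzRels →* Multiplicative ℤ :=
  PresentedGroup.toGroup lift_xExponentOnGenerators_eq_one

@[simp]
theorem xExponent_of_zero : xExponent (PresentedGroup.of 0) = Multiplicative.ofAdd 1 :=
  PresentedGroup.toGroup.of _

@[simp]
theorem xExponent_of_one : xExponent (PresentedGroup.of 1) = 1 :=
  PresentedGroup.toGroup.of _

theorem eq_zero_of_isConj_pow_of_zero_pow_of_one {m n : ℤ}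
    (h : IsConj ((PresentedGroup.of 0 : PresentedGroup hxyzRels) ^ m) (PresentedGroup.of 1 ^ n)) :
    m = 0 := by
  have h_images : xExponent (PresentedGroup.of 0 ^ m) = xExponent (PresentedGroup.of 1 ^ n) :=
    isConj_iff_eq.mp (xExponent.map_isConj h)
  simpa using congrArg Multiplicative.toAdd h_images

/-- In the group `H = ⟨x, y, z ∣ xyx⁻¹y⁻², yzy⁻¹z⁻²⟩`, if `xᵐ` is conjugate to `yⁿ`
for integers `m`, `n`, then `m = 0`. -/
theorem stmt_16 (m n : ℤ) (k : PresentedGroup hxyzRels)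
    (h : (PresentedGroup.of 0 : PresentedGroup hxyzRels) ^ m =
      k * (PresentedGroup.of 1 : PresentedGroup hxyzRels) ^ n * k⁻¹) :
    m = 0 :=
  eq_zero_of_isConj_pow_of_zero_pow_of_one (isConj_iff.mpr ⟨k, h.symm⟩).symm
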